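/- Let f : [0,∞) → ℝ be continuous and set X(t) = B(t) − f(t). Then almost surely no point of the zero set Z(X) = {t > 0 : X(t) = 0} is a local extremum of X, i.e. almost surely there is no t > 0 with X(t) = 0 such that X attains a local maximum or a local minimum at t. -/

import Mathlib

open MeasureTheory ProbabilityTheory Filter Set Topology
open scoped ENNReal

/-- `B` is a standard one-dimensional Brownian motion started at `0` under the
probability measure `μ`: it starts at `0`, has continuous paths, Gaussian increments
with mean `0` and variance given by the time increment, and independent increments. -/
structure IsBrownianMotion {Ω : Type*} [MeasurableSpace Ω]
    (μ : Measure Ω) (B : ℝ → Ω → ℝ) : Prop where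
  isProbabilityMeasure : IsProbabilityMeasure μ
  measurable : ∀ t : ℝ, Measurable (B t)
  start : ∀ ω, B 0 ω = 0
  cont_paths : ∀ ω, Continuous fun t => B t ω
  gauss_incr : ∀ s t : ℝ, 0 ≤ s → s ≤ t →
    μ.map (fun ω => B t ω - B s ω) = gaussianReal 0 (Real.toNNReal (t - s))
  indep_incr : ∀ (n : ℕ) (u : ℕ → ℝ), (∀ i, 0 ≤ u i) → Monotone u →
    iIndepFun
      (fun (i : Fin n) ω => B (u (i.1 + 1)) ω - B (u i.1) ω) μ

/-- The set of zeros of `g` in `(0, ∞)`. -/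
def zeroSet (g : ℝ → ℝ) : Set ℝ := {t : ℝ | 0 < t ∧ g t = 0}

/-- `t` is an isolated point of the set `Z ⊆ ℝ`. -/
def IsolatedPointOf (Z : Set ℝ) (t : ℝ) : Prop :=
  t ∈ Z ∧ ∃ ε > 0, ∀ s ∈ Z, |s - t| < ε → s = t

/-! Fix rationals `0 < p < q`. If a zero `t ∈ [p, q]` of `X = B - f` is a maximum of `X` on
`[p, q]`, then by continuity `sup_{s ∈ D} (B s - B p - f s) = -B p`, where `D` is the countable
dense set of dyadic points of `[p, q]`. The left side is measurable with respect to the increments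
of `B` after `p`, which are independent of the nonatomic Gaussian variable `B p`, so this
happens with probability zero. Every zero local maximum arises this way for some rational
`p, q`, and zero local minima are zero local maxima of `(-B) - (-f)`, with `-B` again a
Brownian motion. -/

namespace ProbabilityTheory

variable {Ω : Type*} [MeasurableSpace Ω] {μ : Measure Ω}

lemma iIndepFun_of_forall_fin {β : Type*} [MeasurableSpace β] {f : ℕ → Ω → β}
    (h : ∀ n, iIndepFun (fun i : Fin n => f i) μ) : iIndepFun f μ := by
  refine iIndepFun_iff_finset.2 fun s => ?_
  obtain ⟨n, hn⟩ := s.exists_nat_subset_range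
  exact (h n).precomp (g := fun i : s => ⟨i, Finset.mem_range.1 (hn i.2)⟩)
    fun i j hij => Subtype.ext (congrArg Fin.val hij)

lemma measure_eq_eq_zero_of_indepFun {α : Type*} [MeasurableSpace α] [MeasurableEq α]
    [IsProbabilityMeasure μ] {X Y : Ω → α} (hX : Measurable X) (hY : Measurable Y)
    (hXY : IndepFun X Y μ) (hX0 : NullSingletonClass (μ.map X)) : μ {ω | X ω = Y ω} = 0 := by
  have hfiber : ∀ a : α, Prod.mk a ⁻¹' {x : α × α | x.2 = x.1} = {a} := by
    intro a; ext b; simp [eq_comm]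
  have hdiag : MeasurableSet {x : α × α | x.2 = x.1} :=
    measurableSet_eq_fun measurable_snd measurable_fst
  change μ ((fun ω => (Y ω, X ω)) ⁻¹' {x : α × α | x.2 = x.1}) = 0
  rw [← Measure.map_apply (hY.prodMk hX) hdiag,
    (indepFun_iff_map_prod_eq_prod_map_map hY.aemeasurable hX.aemeasurable).1 hXY.symm,
    Measure.prod_apply hdiag]
  simp [hfiber]

lemma iIndepFun.indep_comap_zero_iSup_succ {β : Type*} [MeasurableSpace β] {f : ℕ → Ω → β}
    (hf : ∀ i, Measurable (f i)) (h : iIndepFun f μ) :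
    Indep (MeasurableSpace.comap (f 0) inferInstance)
      (⨆ i, MeasurableSpace.comap (f (i + 1)) inferInstance) μ := by
  have := indep_biSup_compl (fun i => (hf i).comap_le) h.iIndep {0}
  rw [iSup_singleton] at this
  exact indep_of_indep_of_le_right this <| iSup_le fun i =>
    le_iSup₂ (f := fun i (_ : i ∈ ({0} : Set ℕ)ᶜ) => MeasurableSpace.comap (f i) inferInstance)
      (i + 1) i.succ_ne_zero

end ProbabilityTheory

abbrev incrementsFrom {Ω : Type*} (B : ℝ → Ω → ℝ) (p : ℝ) (S : Set ℝ) : MeasurableSpace Ω :=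
  ⨆ s ∈ S, MeasurableSpace.comap (fun ω => B s ω - B p ω) inferInstance

def dyadicFrom (p : ℝ) : Set ℝ := ⋃ k : ℕ, range fun j : ℕ => p + j / 2 ^ k

section Increments

variable {Ω : Type*} {B : ℝ → Ω → ℝ} {p : ℝ}

lemma incrementsFrom_mono {S T : Set ℝ} (h : S ⊆ T) :
    incrementsFrom B p S ≤ incrementsFrom B p T :=
  biSup_mono h

lemma measurable_incrementsFrom {S : Set ℝ} {s : ℝ} (hs : s ∈ S) :
    Measurable[incrementsFrom B p S] fun ω => B s ω - B p ω :=
  (comap_measurable _).mono (le_iSup₂ (f := fun s (_ : s ∈ S) =>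
    MeasurableSpace.comap (fun ω => B s ω - B p ω) inferInstance) s hs) le_rfl

lemma incrementsFrom_iUnion {ι : Sort*} (S : ι → Set ℝ) :
    incrementsFrom B p (⋃ i, S i) = ⨆ i, incrementsFrom B p (S i) :=
  iSup_iUnion S _

end Increments

lemma countable_dyadicFrom (p : ℝ) : (dyadicFrom p).Countable :=
  countable_iUnion fun _ => countable_range _

lemma mem_closure_dyadicFrom_inter_Icc {p q t : ℝ} (hpt : p ≤ t) (htq : t ≤ q) :
    t ∈ closure (dyadicFrom p ∩ Icc p q) := by
  refine Metric.mem_closure_iff.2 fun ε hε => ?_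
  obtain ⟨k, hk⟩ := exists_pow_lt_of_lt_one hε (by norm_num : (1 / 2 : ℝ) < 1)
  have h2k : (0 : ℝ) < 2 ^ k := by positivity
  set j := ⌊(t - p) * 2 ^ k⌋₊
  have hj : (j : ℝ) ≤ (t - p) * 2 ^ k := Nat.floor_le (mul_nonneg (sub_nonneg.2 hpt) h2k.le)
  have hj' : (t - p) * 2 ^ k < j + 1 := Nat.lt_floor_add_one _
  have hle : p + j / 2 ^ k ≤ t := by
    have := (div_le_iff₀ h2k).2 hj
    linarith
  have hlt : t - (p + j / 2 ^ k) < 1 / 2 ^ k := by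
    have := (lt_div_iff₀ h2k).2 hj'
    rw [add_div] at this
    linarith
  refine ⟨p + j / 2 ^ k, ⟨mem_iUnion.2 ⟨k, j, rfl⟩, ?_, hle.trans htq⟩, ?_⟩
  · have : (0 : ℝ) ≤ j / 2 ^ k := by positivity
    linarith
  · rw [one_div_pow] at hk
    rw [Real.dist_eq, abs_of_nonneg (by linarith)]
    linarith

lemma ciSup_subtype_eq_of_mem_closure {X α : Type*} [TopologicalSpace X]
    [ConditionallyCompleteLinearOrder α] [TopologicalSpace α] [OrderTopology α]
    {D : Set X} {g : X → α} {t : X} (ht : t ∈ closure D) (hg : ContinuousWithinAt g D t)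
    (hmax : ∀ s ∈ D, g s ≤ g t) : ⨆ s : D, g s = g t := by
  have hD : D.Nonempty := closure_nonempty_iff.1 ⟨t, ht⟩
  rw [iSup, ← image_eq_range]
  exact (isLUB_of_mem_closure (by rintro _ ⟨s, hs, rfl⟩; exact hmax s hs)
    (hg.mem_closure_image ht)).csSup_eq (hD.image g)

lemma exists_rat_Icc_subset_of_mem_nhds {s : Set ℝ} {t : ℝ} (h : s ∈ 𝓝 t) :
    ∃ P Q : ℚ, (P : ℝ) < t ∧ t < Q ∧ Icc (P : ℝ) Q ⊆ s := by
  obtain ⟨l, u, ⟨hl, hu⟩, hsub⟩ := mem_nhds_iff_exists_Ioo_subset.1 h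
  obtain ⟨P, hlP, hPt⟩ := exists_rat_btwn hl
  obtain ⟨Q, htQ, hQu⟩ := exists_rat_btwn hu
  exact ⟨P, Q, hPt, htQ, (Icc_subset_Ioo hlP hQu).trans hsub⟩

namespace IsBrownianMotion

variable {Ω : Type*} [MeasurableSpace Ω] {μ : Measure Ω} {B : ℝ → Ω → ℝ}

lemma neg (hB : IsBrownianMotion μ B) : IsBrownianMotion μ fun t ω => -B t ω where
  isProbabilityMeasure := hB.isProbabilityMeasure
  measurable t := (hB.measurable t).neg
  start ω := by simp [hB.start ω]
  cont_paths ω := (hB.cont_paths ω).neg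
  gauss_incr s t hs hst := by
    have h : (fun ω => -B t ω - -B s ω) = (fun x => -x) ∘ fun ω => B t ω - B s ω := by
      funext ω; simp only [Function.comp_apply]; ring
    have hinc : Measurable fun ω => B t ω - B s ω := (hB.measurable t).sub (hB.measurable s)
    rw [h, ← Measure.map_map (measurable_neg : Measurable fun x : ℝ => -x) hinc,
      hB.gauss_incr s t hs hst, gaussianReal_map_neg, neg_zero]
  indep_incr n u hu0 hu := by
    convert (hB.indep_incr n u hu0 hu).comp (fun _ x => -x) fun _ => measurable_neg using 1
    funext i ω; simp only [Function.comp_apply]; ring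

lemma map_eq_gaussianReal (hB : IsBrownianMotion μ B) {t : ℝ} (ht : 0 ≤ t) :
    μ.map (B t) = gaussianReal 0 t.toNNReal := by
  simpa [hB.start] using hB.gauss_incr 0 t le_rfl ht

lemma iIndepFun_increments (hB : IsBrownianMotion μ B) {u : ℕ → ℝ} (hu0 : ∀ i, 0 ≤ u i)
    (hu : Monotone u) : iIndepFun (fun i ω => B (u (i + 1)) ω - B (u i) ω) μ :=
  iIndepFun_of_forall_fin fun n => hB.indep_incr n u hu0 hu

lemma incrementsFrom_le (hB : IsBrownianMotion μ B) (p : ℝ) (S : Set ℝ) :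
    incrementsFrom B p S ≤ ‹MeasurableSpace Ω› :=
  iSup₂_le fun s _ => ((hB.measurable s).sub (hB.measurable p)).comap_le

lemma indep_incrementsFrom_range (hB : IsBrownianMotion μ B) {p : ℝ} (hp : 0 ≤ p) {u : ℕ → ℝ}
    (hu : Monotone u) (hpu : p ≤ u 0) :
    Indep (MeasurableSpace.comap (B p) inferInstance) (incrementsFrom B p (range u)) μ := by
  -- `B p` is the first increment of the monotone sequence `0, p, u 0, u 1, …`
  obtain ⟨v, hv0, hv1, hv⟩ : ∃ v : ℕ → ℝ, v 0 = 0 ∧ v 1 = p ∧ ∀ j, v (j + 2) = u j :=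
    ⟨fun | 0 => 0 | 1 => p | j + 2 => u j, rfl, rfl, fun _ => rfl⟩
  have hv_mono : Monotone v := by
    refine monotone_nat_of_le_succ fun i => ?_
    rcases i with _ | _ | j
    · simpa [hv0, hv1] using hp
    · simpa [hv1, hv 0] using hpu
    · rw [hv, hv]
      exact hu j.le_succ
  have hv_nonneg : ∀ i, 0 ≤ v i := fun i => hv0 ▸ hv_mono (Nat.zero_le i)
  set incr : ℕ → Ω → ℝ := fun i ω => B (v (i + 1)) ω - B (v i) ω with hincr_def
  have hindep : Indep (MeasurableSpace.comap (incr 0) inferInstance)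
      (⨆ i, MeasurableSpace.comap (incr (i + 1)) inferInstance) μ :=
    (hB.iIndepFun_increments hv_nonneg hv_mono).indep_comap_zero_iSup_succ
      fun i => (hB.measurable _).sub (hB.measurable _)
  have hincr0 : incr 0 = B p := by
    funext ω
    simp [hincr_def, hv0, hv1, hB.start ω]
  have hincr : ∀ i, Measurable[⨆ i, MeasurableSpace.comap (incr (i + 1)) inferInstance]
      (incr (i + 1)) := fun i =>
    (comap_measurable _).mono (le_iSup (fun i => MeasurableSpace.comap (incr (i + 1)) _) i) le_rfl
  have htelescope : ∀ j, Measurable[⨆ i, MeasurableSpace.comap (incr (i + 1)) inferInstance]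
      fun ω => B (u j) ω - B p ω := by
    intro j
    induction j with
    | zero => simpa [hincr_def, hv 0, hv1] using hincr 0
    | succ j ih =>
      have hsplit : (fun ω => B (u (j + 1)) ω - B p ω)
          = fun ω => incr (j + 2) ω + (B (u j) ω - B p ω) := by
        funext ω
        simp only [hincr_def, hv]
        ring
      rw [hsplit]
      exact (hincr (j + 1)).add ih
  rw [hincr0] at hindep
  exact indep_of_indep_of_le_right hindep
    (iSup₂_le fun s ⟨j, hj⟩ => hj ▸ (htelescope j).comap_le)

lemma indep_incrementsFrom_dyadicFrom (hB : IsBrownianMotion μ B) {p : ℝ} (hp : 0 ≤ p) :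
    Indep (MeasurableSpace.comap (B p) inferInstance) (incrementsFrom B p (dyadicFrom p)) μ := by
  have := hB.isProbabilityMeasure
  have hgrid : ∀ k : ℕ, Monotone fun j : ℕ => p + j / 2 ^ k := fun k j j' h => by
    dsimp only
    gcongr
  have hrefine : Monotone fun k : ℕ => incrementsFrom B p (range fun j : ℕ => p + j / 2 ^ k) :=
    monotone_nat_of_le_succ fun k => incrementsFrom_mono <| range_subset_iff.2 fun j =>
      ⟨2 * j, by push_cast; field_simp; ring⟩
  rw [dyadicFrom, incrementsFrom_iUnion]
  exact (indep_iSup_of_monotone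
    (fun k => (hB.indep_incrementsFrom_range hp (hgrid k) (by simp)).symm)
    (fun k => hB.incrementsFrom_le p _) (hB.measurable p).comap_le hrefine).symm

lemma ae_ne_of_measurable_incrementsFrom (hB : IsBrownianMotion μ B) {p : ℝ} (hp : 0 < p)
    {Y : Ω → ℝ} (hY : Measurable[incrementsFrom B p (dyadicFrom p)] Y) :
    ∀ᵐ ω ∂μ, B p ω ≠ Y ω := by
  have := hB.isProbabilityMeasure
  rw [ae_iff]
  simp only [ne_eq, not_not]
  refine measure_eq_eq_zero_of_indepFun (hB.measurable p)
    (hY.mono (hB.incrementsFrom_le _ _) le_rfl) ?_ ?_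
  · rw [IndepFun_iff_Indep]
    exact indep_of_indep_of_le_right (hB.indep_incrementsFrom_dyadicFrom hp.le) hY.comap_le
  · rw [hB.map_eq_gaussianReal hp.le]
    exact nullSingletonClass_gaussianReal (by simpa using hp)

lemma ae_forall_not_isLocalMax_of_eq_zero (hB : IsBrownianMotion μ B) {f : ℝ → ℝ}
    (hf : ContinuousOn f (Ici 0)) :
    ∀ᵐ ω ∂μ, ∀ t, 0 < t → B t ω - f t = 0 → ¬IsLocalMax (fun s => B s ω - f s) t := by
  have hcount : ∀ p q : ℝ, Countable ↥(dyadicFrom p ∩ Icc p q) := fun p q =>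
    ((countable_dyadicFrom p).mono inter_subset_left).to_subtype
  have hnull : ∀ᵐ ω ∂μ, ∀ P Q : ℚ, 0 < (P : ℝ) →
      B P ω ≠ -⨆ s : ↥(dyadicFrom P ∩ Icc (P : ℝ) Q), (B s ω - B P ω - f s) := by
    simp only [ae_all_iff]
    intro P Q hP
    exact hB.ae_ne_of_measurable_incrementsFrom hP <| Measurable.neg <| Measurable.iSup
      fun s : ↥(dyadicFrom P ∩ Icc (P : ℝ) Q) => (measurable_incrementsFrom s.2.1).sub_const _
  filter_upwards [hnull] with ω hω t ht hzero hmax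
  obtain ⟨P, Q, hPt, htQ, hPQ⟩ := exists_rat_Icc_subset_of_mem_nhds (hmax.and (Ioi_mem_nhds ht))
  refine hω P Q (hPQ ⟨le_rfl, hPt.le.trans htQ.le⟩).2 ?_
  have hcont : ContinuousAt (fun s => B s ω - B P ω - f s) t :=
    ((hB.cont_paths ω).continuousAt.sub continuousAt_const).sub
      (hf.continuousAt (Ici_mem_nhds ht))
  rw [ciSup_subtype_eq_of_mem_closure (mem_closure_dyadicFrom_inter_Icc hPt.le htQ.le)
    hcont.continuousWithinAt fun s hs => by have := (hPQ hs.2).1; dsimp only at this; linarith]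
  linarith

end IsBrownianMotion

/-- Almost surely, no zero of `X = B - f` in `(0,∞)` is a local maximum or a local minimum
of `X`. -/
theorem no_zero_is_local_extremum {Ω : Type*} [MeasurableSpace Ω] (μ : Measure Ω) (B : ℝ → Ω → ℝ)
    (hB : IsBrownianMotion μ B)
    (f : ℝ → ℝ) (hf : ContinuousOn f (Set.Ici 0)) :
    ∀ᵐ ω ∂μ, ¬ ∃ t : ℝ, 0 < t ∧ B t ω - f t = 0 ∧
      (IsLocalMax (fun s => B s ω - f s) t ∨ IsLocalMin (fun s => B s ω - f s) t) := by
  filter_upwards [hB.ae_forall_not_isLocalMax_of_eq_zero hf,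
    hB.neg.ae_forall_not_isLocalMax_of_eq_zero (f := fun s => -f s) hf.neg] with ω hmax hmin
  rintro ⟨t, ht, hzero, hext | hext⟩
  · exact hmax t ht hzero hext
  · have hneg : (fun s => -B s ω - -f s) = fun s => -(B s ω - f s) := by
      funext s
      ring
    exact hmin t ht (by linarith) (hneg ▸ hext.neg)
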